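/- arXiv:1210.5727 — 2 statements merged into one kernel-verified Lean document; each statement's English description precedes it below -/
import Mathlib

section
/- Let K be a number field. For every ε > 0 there is a constant C = C(K, ε) such that for all real P ≥ 2 and every integer u, the number of algebraic integers z ∈ O_K satisfying N_{K/ℚ}(z) = u and |σ(z)| ≤ P for every embedding σ : K → ℂ is at most C·P^ε. -/
/-!
Send `z` to the principal ideal `(z)`. Since `(z)` has norm `|u|`, it divides `(|u|)`, an ideal of
norm `|u|ⁿ ≤ P^(n²)` (`n = [K : ℚ]`), and the divisor bound `d(J) ≪_δ N(J)^δ` leaves `O(P^ε)`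
possible ideals. Two `z` with the same ideal differ by a unit `η`; from `|N z| ≥ 1` and
`|σ z| ≤ P` every place satisfies `P⁻ⁿ ≤ w z ≤ P`, hence `P^-(n+1) ≤ w η ≤ P^(n+1)`. The
logarithmic embedding sends these units, with fibres cosets of the torsion subgroup, to points of
the unit lattice in a ball of radius `O(log P)`, and there are `O((log P)^r) = O(P^ε)` of those.
-/

open Module

theorem Set.ncard_le_mul_ncard_image {α β : Type*} {s : Set α} (hs : s.Finite) (f : α → β)
    {k : ℕ} (hk : ∀ b, (s ∩ f ⁻¹' {b}).ncard ≤ k) : s.ncard ≤ k * (f '' s).ncard := by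
  classical
  lift s to Finset α using hs
  rw [ncard_coe_finset, ← Finset.coe_image, ncard_coe_finset]
  refine Finset.card_le_mul_card_image s k fun b _ => ?_
  rw [← ncard_coe_finset, Finset.coe_filter]
  exact hk b

theorem Real.pow_rpow_div_natCast {x : ℝ} (hx : 0 ≤ x) {k : ℕ} (hk : k ≠ 0) (y : ℝ) :
    (x ^ k) ^ (y / k) = x ^ y := by
  rw [← Real.rpow_natCast, ← Real.rpow_mul hx, mul_div_cancel₀ _ (by exact_mod_cast hk)]

theorem exists_one_add_log_pow_le_mul_rpow (r : ℕ) {δ : ℝ} (hδ : 0 < δ) :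
    ∃ C > 0, ∀ x : ℝ, 1 ≤ x → (1 + Real.log x) ^ r ≤ C * x ^ δ := by
  set s := δ / (r + 1)
  have hs : 0 < s := by positivity
  refine ⟨(1 + 1 / s) ^ r, by positivity, fun x hx => ?_⟩
  have hxs : 1 ≤ x ^ s := Real.one_le_rpow hx hs.le
  have hlog : 1 + Real.log x ≤ (1 + 1 / s) * x ^ s := by
    have := Real.log_le_rpow_div (x := x) (by linarith) hs
    rw [div_eq_mul_one_div, mul_comm] at this
    nlinarith
  calc (1 + Real.log x) ^ r ≤ ((1 + 1 / s) * x ^ s) ^ r := by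
        gcongr; linarith [Real.log_nonneg hx]
    _ = (1 + 1 / s) ^ r * x ^ (s * r) := by
        rw [mul_pow, ← Real.rpow_natCast (x ^ s), ← Real.rpow_mul (by linarith)]
    _ ≤ (1 + 1 / s) ^ r * x ^ δ := by
        gcongr
        rw [div_mul_eq_mul_div, div_le_iff₀ (by positivity)]
        nlinarith

theorem natCast_add_one_le_max_mul_pow {y : ℝ} (hy : 1 < y) (e : ℕ) :
    (e + 1 : ℝ) ≤ max 1 (y - 1)⁻¹ * y ^ e := by
  have bernoulli : 1 + e * (y - 1) ≤ y ^ e := by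
    simpa using one_add_mul_le_pow (a := y - 1) (by linarith) e
  have he : (0 : ℝ) ≤ e := e.cast_nonneg
  rcases le_total 1 (y - 1) with h | h
  · calc (e + 1 : ℝ) ≤ 1 + e * (y - 1) := by nlinarith
      _ ≤ y ^ e := bernoulli
      _ ≤ max 1 (y - 1)⁻¹ * y ^ e := le_mul_of_one_le_left (by positivity) (le_max_left _ _)
  · calc (e + 1 : ℝ) ≤ (y - 1)⁻¹ * (1 + e * (y - 1)) := by
          rw [mul_add, mul_one, mul_left_comm, inv_mul_cancel₀ (by linarith), mul_one]
          linarith [(one_le_inv₀ (by linarith)).mpr h]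
      _ ≤ max 1 (y - 1)⁻¹ * y ^ e := by gcongr; exact le_max_right _ _

/-- The factor `e + 1` of the divisor function at a prime of norm `x`: only the primes of norm
at most `t` contribute a constant. -/
theorem natCast_add_one_le_ite_mul_rpow_pow {δ : ℝ} (hδ : 0 < δ) {x t : ℝ} (hx : 2 ≤ x)
    (ht : 2 ^ δ⁻¹ ≤ t) (e : ℕ) :
    (e + 1 : ℝ) ≤ (if x ≤ t then max 1 ((2 : ℝ) ^ δ - 1)⁻¹ else 1) * (x ^ δ) ^ e := by
  have h2δ : (2 : ℝ) ^ δ ≤ x ^ δ := by gcongr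
  have h1 : 1 < (2 : ℝ) ^ δ := Real.one_lt_rpow (by norm_num) hδ
  refine (natCast_add_one_le_max_mul_pow (h1.trans_le h2δ) e).trans ?_
  gcongr
  split_ifs with hsmall
  · exact max_le_max le_rfl (inv_anti₀ (by linarith) (by linarith))
  · have hlarge : 2 ≤ x ^ δ :=
      calc (2 : ℝ) = ((2 : ℝ) ^ δ⁻¹) ^ δ := (Real.rpow_inv_rpow (by norm_num) hδ.ne').symm
        _ ≤ x ^ δ := by gcongr; linarith [not_le.mp hsmall]
    exact max_le le_rfl (inv_le_one_of_one_le₀ (by linarith))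

theorem Fintype.card_piFinset_Icc_neg_natCast (ι : Type*) [Fintype ι] [DecidableEq ι] (M : ℕ) :
    (piFinset fun _ : ι => Finset.Icc (-(M : ℤ)) M).card = (2 * M + 1) ^ card ι := by
  rw [card_piFinset, Finset.prod_const, Int.card_Icc, Finset.card_univ, sub_neg_eq_add,
    show (M + 1 + M : ℤ) = ((2 * M + 1 : ℕ) : ℤ) by push_cast; ring, Int.toNat_natCast]

theorem ZLattice.exists_ncard_inter_closedBall_le {E : Type*} [NormedAddCommGroup E]
    [NormedSpace ℝ E] [FiniteDimensional ℝ E] (L : Submodule ℤ E) [DiscreteTopology L]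
    [IsZLattice ℝ L] :
    ∃ C > 0, ∀ R : ℝ, 0 ≤ R →
      (((L : Set E) ∩ Metric.closedBall 0 R).ncard : ℝ) ≤ (C * (1 + R)) ^ finrank ℤ L := by
  classical
  set b := Free.chooseBasis ℤ L
  set B := b.ofZLatticeBasis ℝ L
  set T : E →L[ℝ] (Free.ChooseBasisIndex ℤ L → ℝ) := B.equivFunL.toContinuousLinearMap
  refine ⟨3 * (‖T‖ + 1), by positivity, fun R hR => ?_⟩
  set M : ℕ := ⌈‖T‖ * R⌉₊
  have hcoord_int : ∀ x : L, ∀ i, B.repr x i = (b.repr x i : ℝ) :=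
    b.ofZLatticeBasis_repr_apply ℝ L
  have hcoord_le : ∀ x ∈ Metric.closedBall (0 : E) R, ∀ i, |B.repr x i| ≤ M := fun x hx i =>
    calc |B.repr x i| = ‖T x i‖ := rfl
      _ ≤ ‖T x‖ := norm_le_pi_norm _ i
      _ ≤ ‖T‖ * ‖x‖ := T.le_opNorm x
      _ ≤ ‖T‖ * R := by gcongr; simpa using hx
      _ ≤ M := Nat.le_ceil _
  set box := Fintype.piFinset fun _ : Free.ChooseBasisIndex ℤ L => Finset.Icc (-(M : ℤ)) M
  -- on `L` the coordinates are integers, so taking floors loses nothing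
  have hmaps : ∀ x ∈ (L : Set E) ∩ Metric.closedBall 0 R,
      (fun i => ⌊B.repr x i⌋) ∈ (box : Set _) := by
    rintro x ⟨hxL, hxR⟩
    simp only [box, Finset.mem_coe, Fintype.mem_piFinset, Finset.mem_Icc]
    intro i
    have := hcoord_le x hxR i
    rw [hcoord_int ⟨x, hxL⟩ i] at this ⊢
    rw [Int.floor_intCast]
    exact_mod_cast abs_le.mp this
  have hinj : Set.InjOn (fun x i => ⌊B.repr x i⌋) ((L : Set E) ∩ Metric.closedBall 0 R) := by
    rintro x ⟨hxL, -⟩ y ⟨hyL, -⟩ hxy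
    refine B.equivFun.injective (funext fun i => ?_)
    have := congrFun hxy i
    simp only [Basis.equivFun_apply, hcoord_int ⟨x, hxL⟩ i, hcoord_int ⟨y, hyL⟩ i,
      Int.floor_intCast] at this ⊢
    rw [this]
  have hcard : ((L : Set E) ∩ Metric.closedBall 0 R).ncard ≤ (2 * M + 1) ^ finrank ℤ L := by
    have := Set.ncard_le_ncard_of_injOn _ hmaps hinj box.finite_toSet
    rwa [Set.ncard_coe_finset, Fintype.card_piFinset_Icc_neg_natCast,
      ← finrank_eq_card_chooseBasisIndex] at this
  have hM : (M : ℝ) ≤ ‖T‖ * R + 1 := (Nat.ceil_lt_add_one (by positivity)).le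
  calc (((L : Set E) ∩ Metric.closedBall 0 R).ncard : ℝ)
      ≤ ((2 * M + 1 : ℕ) : ℝ) ^ finrank ℤ L := by exact_mod_cast hcard
    _ ≤ (3 * (‖T‖ + 1) * (1 + R)) ^ finrank ℤ L := by
        gcongr
        push_cast
        nlinarith [norm_nonneg T]

open UniqueFactorizationMonoid

theorem UniqueFactorizationMonoid.ncard_setOf_dvd_le {α : Type*} [CommMonoidWithZero α]
    [NormalizationMonoid α] [UniqueFactorizationMonoid α] [Subsingleton αˣ] [DecidableEq α]
    {a : α} (ha : a ≠ 0) :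
    {b | b ∣ a}.ncard ≤
      ∏ p ∈ (normalizedFactors a).toFinset, ((normalizedFactors a).count p + 1) := by
  rw [← Multiset.card_Iic, ← Set.ncard_coe_finset]
  refine Set.ncard_le_ncard_of_injOn normalizedFactors (fun b hb => ?_) (fun b hb c hc h => ?_)
    (Finset.finite_toSet _)
  · rw [Finset.mem_coe, Finset.mem_Iic]
    exact (dvd_iff_normalizedFactors_le_normalizedFactors (ne_zero_of_dvd_ne_zero ha hb) ha).mp hb
  · rw [← associated_iff_eq]
    exact (prod_normalizedFactors (ne_zero_of_dvd_ne_zero ha hb)).symm.trans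
      (h ▸ prod_normalizedFactors (ne_zero_of_dvd_ne_zero ha hc))

namespace Ideal

variable {S : Type*} [CommRing S] [IsDedekindDomain S] [Module.Free ℤ S]

theorem absNorm_eq_prod_pow_count [DecidableEq (Ideal S)] {J : Ideal S} (hJ : J ≠ ⊥) :
    absNorm J = ∏ P ∈ (normalizedFactors J).toFinset,
      absNorm P ^ (normalizedFactors J).count P := by
  conv_lhs => rw [← associated_iff_eq.mp (prod_normalizedFactors hJ),
    Finset.prod_multiset_count, map_prod]
  simp only [map_pow]

variable [Module.Finite ℤ S]

theorem two_le_absNorm_of_prime {P : Ideal S} (hP : Prime P) : 2 ≤ absNorm P := by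
  have h0 : absNorm P ≠ 0 := by rw [Ne, absNorm_eq_zero_iff]; exact hP.ne_zero
  have h1 : absNorm P ≠ 1 := by rw [Ne, absNorm_eq_one_iff, ← isUnit_iff]; exact hP.not_isUnit
  omega

variable [CharZero S]

theorem finite_setOf_dvd {J : Ideal S} (hJ : J ≠ ⊥) : {I | I ∣ J}.Finite :=
  (finite_setOfPred_absNorm_le (absNorm J)).subset fun _ hI =>
    Nat.le_of_dvd (Nat.pos_of_ne_zero (by rwa [Ne, absNorm_eq_zero_iff])) (map_dvd absNorm hI)

theorem exists_ncard_setOf_dvd_le_mul_rpow {δ : ℝ} (hδ : 0 < δ) :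
    ∃ C > 0, ∀ J : Ideal S, J ≠ ⊥ → ({I | I ∣ J}.ncard : ℝ) ≤ C * (absNorm J : ℝ) ^ δ := by
  classical
  set t : ℕ := ⌈(2 : ℝ) ^ δ⁻¹⌉₊
  set M : ℝ := max 1 ((2 : ℝ) ^ δ - 1)⁻¹
  set B := {I : Ideal S | absNorm I ≤ t}.ncard
  refine ⟨M ^ B, by positivity, fun J hJ => ?_⟩
  set T := (normalizedFactors J).toFinset
  set e := fun P => (normalizedFactors J).count P
  have hfactor : ∀ P ∈ T, (e P + 1 : ℝ) ≤
      (if (absNorm P : ℝ) ≤ t then M else 1) * ((absNorm P : ℝ) ^ δ) ^ e P := by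
    intro P hP
    have hN := two_le_absNorm_of_prime (prime_of_normalized_factor P (Multiset.mem_toFinset.mp hP))
    exact natCast_add_one_le_ite_mul_rpow_pow hδ (by exact_mod_cast hN) (Nat.le_ceil _) (e P)
  have hsmall : (T.filter fun P => (absNorm P : ℝ) ≤ t).card ≤ B := by
    rw [← Set.ncard_coe_finset]
    refine Set.ncard_le_ncard (fun P hP => ?_) (finite_setOfPred_absNorm_le t)
    exact_mod_cast (Finset.mem_filter.mp hP).2
  calc ({I | I ∣ J}.ncard : ℝ) ≤ ∏ P ∈ T, (e P + 1 : ℝ) := by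
        exact_mod_cast UniqueFactorizationMonoid.ncard_setOf_dvd_le hJ
    _ ≤ ∏ P ∈ T, (if (absNorm P : ℝ) ≤ t then M else 1) * ((absNorm P : ℝ) ^ δ) ^ e P :=
        Finset.prod_le_prod (fun _ _ => by positivity) hfactor
    _ = M ^ (T.filter fun P => (absNorm P : ℝ) ≤ t).card * (absNorm J : ℝ) ^ δ := by
        rw [Finset.prod_mul_distrib, Finset.prod_ite, Finset.prod_const, Finset.prod_const_one,
          mul_one, absNorm_eq_prod_pow_count hJ]
        push_cast
        simp_rw [Real.rpow_pow_comm (Nat.cast_nonneg _)]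
        rw [Real.finsetProd_rpow _ _ fun _ _ => by positivity]
    _ ≤ M ^ B * (absNorm J : ℝ) ^ δ := by gcongr; exact le_max_left _ _

end Ideal

open NumberField.InfinitePlace NumberField.Units NumberField.Units.dirichletUnitTheorem

namespace NumberField

variable {K : Type*} [Field K] [NumberField K]

theorem InfinitePlace.prod_pow_mult_le {x : K} {P : ℝ} (hP : 1 ≤ P)
    (hx : ∀ w : InfinitePlace K, w x ≤ P) (s : Finset (InfinitePlace K)) :
    ∏ w ∈ s, w x ^ mult w ≤ P ^ finrank ℚ K :=
  calc ∏ w ∈ s, w x ^ mult w ≤ ∏ w ∈ s, P ^ mult w :=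
        Finset.prod_le_prod (fun _ _ => by positivity) fun w _ =>
          pow_le_pow_left₀ (by positivity) (hx w) _
    _ ≤ ∏ w, P ^ mult w :=
        Finset.prod_le_prod_of_subset_of_one_le (Finset.subset_univ s) (fun _ _ => by positivity)
          fun _ _ _ => one_le_pow₀ hP
    _ = P ^ finrank ℚ K := by rw [Finset.prod_pow_eq_pow_sum, sum_mult_eq]

theorem InfinitePlace.inv_pow_finrank_le {x : K} {P : ℝ} (hP : 1 ≤ P)
    (hx : ∀ w : InfinitePlace K, w x ≤ P) (hN : 1 ≤ |Algebra.norm ℚ x|) (w : InfinitePlace K) :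
    (P ^ finrank ℚ K)⁻¹ ≤ w x := by
  classical
  rcases le_total 1 (w x) with h | h
  · exact (inv_le_one_of_one_le₀ (one_le_pow₀ hP)).trans h
  have hmult : (1 : ℝ) ≤ w x ^ mult w * P ^ finrank ℚ K :=
    calc (1 : ℝ) ≤ (|Algebra.norm ℚ x| : ℚ) := by exact_mod_cast hN
      _ = w x ^ mult w * ∏ w' ∈ Finset.univ.erase w, w' x ^ mult w' := by
        rw [Finset.mul_prod_erase _ (fun w' => w' x ^ mult w') (Finset.mem_univ w),
          prod_eq_abs_norm]
      _ ≤ w x ^ mult w * P ^ finrank ℚ K := by gcongr; exact prod_pow_mult_le hP hx _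
  calc (P ^ finrank ℚ K)⁻¹ ≤ w x ^ mult w := by rwa [inv_le_iff_one_le_mul₀ (by positivity)]
    _ ≤ w x := pow_le_of_le_one (by positivity) h mult_ne_zero

variable (K) in
def unitsBox (Q : ℝ) : Set (𝓞 K)ˣ :=
  {η | ∀ w : InfinitePlace K, Q⁻¹ ≤ w (η : K) ∧ w (η : K) ≤ Q}

variable (K) in
theorem unitsBox_finite (Q : ℝ) : (unitsBox K Q).Finite := by
  refine Set.Finite.of_finite_image ?_ (Units.coe_injective K).injOn
  refine (Embeddings.finite_of_norm_le K ℂ Q).subset ?_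
  rintro _ ⟨η, hη, rfl⟩
  exact ⟨η.val.isIntegral_coe, fun φ => (hη (InfinitePlace.mk φ)).2⟩

open scoped Classical in
theorem logEmbedding_mem_of_mem_unitsBox {Q : ℝ} (hQ : 1 ≤ Q) {η : (𝓞 K)ˣ}
    (hη : η ∈ unitsBox K Q) :
    logEmbedding K (Additive.ofMul η) ∈
      (unitLattice K : Set (logSpace K)) ∩ Metric.closedBall 0 (2 * Real.log Q) := by
  refine ⟨⟨Additive.ofMul η, trivial, rfl⟩, ?_⟩
  rw [mem_closedBall_zero_iff, pi_norm_le_iff_of_nonneg (by positivity [Real.log_nonneg hQ])]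
  intro w
  have hlog : |Real.log (w.val η)| ≤ Real.log Q := by
    rw [abs_le, ← Real.log_inv]
    exact ⟨Real.log_le_log (by positivity) (hη w).1, Real.log_le_log (pos_at_place η w) (hη w).2⟩
  rw [logEmbedding_component, Real.norm_eq_abs, abs_mul, Nat.abs_cast]
  exact mul_le_mul (by unfold mult; split_ifs <;> norm_num) hlog (abs_nonneg _) zero_le_two

variable (K) in
theorem ncard_inter_logEmbedding_fiber_le (s : Set (𝓞 K)ˣ) (v : logSpace K) :
    (s ∩ (fun η => logEmbedding K (Additive.ofMul η)) ⁻¹' {v}).ncard ≤ torsionOrder K := by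
  rcases (s ∩ (fun η => logEmbedding K (Additive.ofMul η)) ⁻¹' {v}).eq_empty_or_nonempty
    with h | ⟨η₀, -, hη₀⟩
  · simp [h]
  have hsub : s ∩ (fun η => logEmbedding K (Additive.ofMul η)) ⁻¹' {v} ⊆
      (η₀ * ·) '' (torsion K : Set (𝓞 K)ˣ) := by
    rintro η ⟨-, hη⟩
    refine ⟨η₀⁻¹ * η, ?_, mul_inv_cancel_left η₀ η⟩
    rw [SetLike.mem_coe, ← logEmbedding_eq_zero_iff, ofMul_mul, ofMul_inv, map_add, map_neg]
    rw [Set.mem_preimage, Set.mem_singleton_iff] at hη hη₀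
    rw [hη, hη₀, neg_add_cancel]
  have hfin : (torsion K : Set (𝓞 K)ˣ).Finite :=
    Set.finite_coe_iff.mp (inferInstanceAs (Finite (torsion K)))
  calc _ ≤ ((η₀ * ·) '' (torsion K : Set (𝓞 K)ˣ)).ncard := Set.ncard_le_ncard hsub (hfin.image _)
    _ ≤ (torsion K : Set (𝓞 K)ˣ).ncard := Set.ncard_image_le hfin
    _ = torsionOrder K := (Nat.card_coe_set_eq _).symm

variable (K) in
theorem exists_ncard_unitsBox_le :
    ∃ C > 0, ∀ Q : ℝ, 1 ≤ Q → ((unitsBox K Q).ncard : ℝ) ≤ C * (1 + Real.log Q) ^ rank K := by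
  classical
  obtain ⟨C, hC, hlattice⟩ := ZLattice.exists_ncard_inter_closedBall_le (unitLattice K)
  refine ⟨torsionOrder K * (2 * C) ^ rank K, by positivity [torsionOrder_pos K], fun Q hQ => ?_⟩
  have hlog := Real.log_nonneg hQ
  set f := fun η : (𝓞 K)ˣ => logEmbedding K (Additive.ofMul η)
  have himage : (f '' unitsBox K Q).ncard ≤
      ((unitLattice K : Set (logSpace K)) ∩ Metric.closedBall 0 (2 * Real.log Q)).ncard :=
    Set.ncard_le_ncard
      (Set.image_subset_iff.mpr fun η hη => logEmbedding_mem_of_mem_unitsBox hQ hη)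
      (unitLattice_inter_ball_finite K _)
  calc ((unitsBox K Q).ncard : ℝ) ≤ torsionOrder K * (f '' unitsBox K Q).ncard := by
        exact_mod_cast Set.ncard_le_mul_ncard_image (unitsBox_finite K Q) f
          (ncard_inter_logEmbedding_fiber_le K _)
    _ ≤ torsionOrder K * (C * (1 + 2 * Real.log Q)) ^ rank K := by
        gcongr
        rw [← unitLattice_rank]
        exact (Nat.cast_le.mpr himage).trans (hlattice _ (by positivity))
    _ ≤ torsionOrder K * (2 * C * (1 + Real.log Q)) ^ rank K := by
        gcongr _ * ?_ ^ _; nlinarith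
    _ = torsionOrder K * (2 * C) ^ rank K * (1 + Real.log Q) ^ rank K := by
        rw [mul_pow, mul_assoc]

variable (K) in
theorem exists_ncard_unitsBox_pow_le_mul_rpow {k : ℕ} (hk : k ≠ 0) {ε : ℝ} (hε : 0 < ε) :
    ∃ C > 0, ∀ P : ℝ, 1 ≤ P → ((unitsBox K (P ^ k)).ncard : ℝ) ≤ C * P ^ ε := by
  obtain ⟨C₁, hC₁, hunits⟩ := exists_ncard_unitsBox_le K
  obtain ⟨C₂, hC₂, hlog⟩ := exists_one_add_log_pow_le_mul_rpow (rank K) (δ := ε / k)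
    (by positivity)
  refine ⟨C₁ * C₂, by positivity, fun P hP => ?_⟩
  calc ((unitsBox K (P ^ k)).ncard : ℝ) ≤ C₁ * (C₂ * (P ^ k) ^ (ε / k)) :=
        (hunits _ (one_le_pow₀ hP)).trans (by gcongr; exact hlog _ (one_le_pow₀ hP))
    _ = C₁ * C₂ * P ^ ε := by rw [Real.pow_rpow_div_natCast (by positivity) hk, mul_assoc]

variable (K) in
def normFiber (u : ℤ) (P : ℝ) : Set (𝓞 K) :=
  {z | Algebra.norm ℚ (algebraMap (𝓞 K) K z) = u ∧
    ∀ σ : K →+* ℂ, ‖σ (algebraMap (𝓞 K) K z)‖ ≤ P}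

variable (K) in
theorem normFiber_finite (u : ℤ) (P : ℝ) : (normFiber K u P).Finite := by
  refine Set.Finite.of_finite_image ?_ RingOfIntegers.coe_injective.injOn
  refine (Embeddings.finite_of_norm_le K ℂ P).subset ?_
  rintro _ ⟨z, hz, rfl⟩
  exact ⟨z.isIntegral_coe, hz.2⟩

variable (K) in
theorem normFiber_zero_subset (P : ℝ) : normFiber K 0 P ⊆ {0} := by
  intro z hz
  have : algebraMap (𝓞 K) K z = 0 := by
    rw [← Algebra.norm_eq_zero_iff (R := ℚ), hz.1, Int.cast_zero]
  exact FaithfulSMul.algebraMap_injective (𝓞 K) K (this.trans (map_zero _).symm)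

theorem infinitePlace_le_of_mem_normFiber {u : ℤ} {P : ℝ} {z : 𝓞 K} (hz : z ∈ normFiber K u P)
    (w : InfinitePlace K) : w (algebraMap (𝓞 K) K z) ≤ P := by
  rw [← mk_embedding w]
  exact hz.2 _

theorem inv_pow_finrank_le_of_mem_normFiber {u : ℤ} (hu : u ≠ 0) {P : ℝ} (hP : 1 ≤ P)
    {z : 𝓞 K} (hz : z ∈ normFiber K u P) (w : InfinitePlace K) :
    (P ^ finrank ℚ K)⁻¹ ≤ w (algebraMap (𝓞 K) K z) := by
  refine InfinitePlace.inv_pow_finrank_le hP (infinitePlace_le_of_mem_normFiber hz) ?_ w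
  rw [hz.1, ← Int.cast_abs, ← Int.cast_one, Int.cast_le]
  exact Int.one_le_abs hu

theorem natAbs_le_of_mem_normFiber {u : ℤ} {P : ℝ} (hP : 1 ≤ P) {z : 𝓞 K}
    (hz : z ∈ normFiber K u P) : (u.natAbs : ℝ) ≤ P ^ finrank ℚ K :=
  calc (u.natAbs : ℝ) = ∏ w, w (algebraMap (𝓞 K) K z) ^ mult w := by
        rw [prod_eq_abs_norm, hz.1, Nat.cast_natAbs]; push_cast; rfl
    _ ≤ P ^ finrank ℚ K :=
        InfinitePlace.prod_pow_mult_le hP (infinitePlace_le_of_mem_normFiber hz) _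

theorem mem_unitsBox_of_mul_mem_normFiber {u : ℤ} (hu : u ≠ 0) {P : ℝ} (hP : 1 ≤ P) {z : 𝓞 K}
    {η : (𝓞 K)ˣ} (hz : z ∈ normFiber K u P) (hzη : z * η ∈ normFiber K u P) :
    η ∈ unitsBox K (P ^ (finrank ℚ K + 1)) := by
  intro w
  have hz₁ := inv_pow_finrank_le_of_mem_normFiber hu hP hz w
  have hz₂ := infinitePlace_le_of_mem_normFiber hz w
  have hzη₁ := inv_pow_finrank_le_of_mem_normFiber hu hP hzη w
  have hzη₂ := infinitePlace_le_of_mem_normFiber hzη w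
  have hpos : 0 < w (algebraMap (𝓞 K) K z) := lt_of_lt_of_le (by positivity) hz₁
  have hη : w (η : K) = w (algebraMap (𝓞 K) K (z * η)) / w (algebraMap (𝓞 K) K z) := by
    rw [map_mul, map_mul, mul_div_cancel_left₀ _ hpos.ne']
  rw [hη, pow_succ]
  constructor
  · calc (P ^ finrank ℚ K * P)⁻¹ = (P ^ finrank ℚ K)⁻¹ / P := by rw [mul_inv, div_eq_mul_inv]
      _ ≤ _ := div_le_div₀ (by positivity) hzη₁ hpos hz₂
  · calc _ ≤ P / (P ^ finrank ℚ K)⁻¹ := div_le_div₀ (by positivity) hzη₂ (by positivity) hz₁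
      _ = P ^ finrank ℚ K * P := by rw [div_inv_eq_mul, mul_comm]

theorem ncard_normFiber_inter_span_fiber_le {u : ℤ} (hu : u ≠ 0) {P : ℝ} (hP : 1 ≤ P)
    (I : Ideal (𝓞 K)) :
    (normFiber K u P ∩ (fun z => Ideal.span {z}) ⁻¹' {I}).ncard ≤
      (unitsBox K (P ^ (finrank ℚ K + 1))).ncard := by
  rcases (normFiber K u P ∩ (fun z => Ideal.span {z}) ⁻¹' {I}).eq_empty_or_nonempty
    with h | ⟨z₀, hz₀, hz₀I⟩
  · simp [h]
  have hsub : normFiber K u P ∩ (fun z => Ideal.span {z}) ⁻¹' {I} ⊆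
      (fun η : (𝓞 K)ˣ => z₀ * η) '' unitsBox K (P ^ (finrank ℚ K + 1)) := by
    rintro z ⟨hz, hzI⟩
    obtain ⟨η, rfl⟩ : Associated z₀ z :=
      Ideal.span_singleton_eq_span_singleton.mp (hz₀I.trans hzI.symm)
    exact ⟨η, mem_unitsBox_of_mul_mem_normFiber hu hP hz₀ hz, rfl⟩
  exact (Set.ncard_le_ncard hsub ((unitsBox_finite K _).image _)).trans
    (Set.ncard_image_le (unitsBox_finite K _))

theorem span_dvd_span_natAbs_of_mem_normFiber {u : ℤ} {P : ℝ} {z : 𝓞 K}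
    (hz : z ∈ normFiber K u P) : Ideal.span {z} ∣ Ideal.span {((u.natAbs : ℕ) : 𝓞 K)} := by
  have hnorm : Algebra.norm ℤ z = u := by
    exact_mod_cast (Algebra.coe_norm_int z).trans hz.1
  rw [Ideal.dvd_iff_le]
  simpa [hnorm] using Ideal.span_singleton_absNorm_le (Ideal.span {z})

theorem ncard_normFiber_le {u : ℤ} (hu : u ≠ 0) {P : ℝ} (hP : 1 ≤ P) :
    (normFiber K u P).ncard ≤ (unitsBox K (P ^ (finrank ℚ K + 1))).ncard *
      {I : Ideal (𝓞 K) | I ∣ Ideal.span {((u.natAbs : ℕ) : 𝓞 K)}}.ncard := by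
  refine (Set.ncard_le_mul_ncard_image (normFiber_finite K u P) _
    (ncard_normFiber_inter_span_fiber_le hu hP)).trans ?_
  gcongr
  · exact Ideal.finite_setOf_dvd (by simpa using hu)
  · rintro _ ⟨z, hz, rfl⟩
    exact span_dvd_span_natAbs_of_mem_normFiber hz

variable (K) in
theorem exists_ncard_dvd_span_natAbs_le_mul_rpow {ε : ℝ} (hε : 0 < ε) :
    ∃ C > 0, ∀ P : ℝ, 1 ≤ P → ∀ u : ℤ, u ≠ 0 → (normFiber K u P).Nonempty →
      ({I : Ideal (𝓞 K) | I ∣ Ideal.span {((u.natAbs : ℕ) : 𝓞 K)}}.ncard : ℝ) ≤ C * P ^ ε := by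
  set n := finrank ℚ K
  have hn : n * n ≠ 0 := by positivity [finrank_pos (R := ℚ) (M := K)]
  obtain ⟨C, hC, hdiv⟩ :=
    Ideal.exists_ncard_setOf_dvd_le_mul_rpow (S := 𝓞 K) (δ := ε / (n * n : ℕ)) (by positivity)
  refine ⟨C, hC, fun P hP u hu ⟨z, hz⟩ => ?_⟩
  have hJ : (Ideal.absNorm (Ideal.span {((u.natAbs : ℕ) : 𝓞 K)}) : ℝ) ≤ P ^ (n * n) := by
    rw [Ideal.absNorm_span_natCast, RingOfIntegers.rank, pow_mul, Nat.cast_pow]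
    exact pow_le_pow_left₀ (by positivity) (natAbs_le_of_mem_normFiber hP hz) _
  calc _ ≤ C * (P ^ (n * n)) ^ (ε / (n * n : ℕ)) := (hdiv _ (by simpa using hu)).trans (by gcongr)
    _ = C * P ^ ε := by rw [Real.pow_rpow_div_natCast (by positivity) hn]

end NumberField

open NumberField

theorem norm_fiber_count_le (K : Type*) [Field K] [NumberField K] :
    ∀ ε : ℝ, 0 < ε → ∃ C : ℝ, 0 < C ∧ ∀ P : ℝ, 2 ≤ P → ∀ u : ℤ,
      (Nat.card {z : 𝓞 K //
          Algebra.norm ℚ (algebraMap (𝓞 K) K z) = (u : ℚ) ∧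
          ∀ σ : K →+* ℂ, ‖σ (algebraMap (𝓞 K) K z)‖ ≤ P} : ℝ)
        ≤ C * P ^ ε := by
  intro ε hε
  obtain ⟨C₁, hC₁, hunits⟩ :=
    exists_ncard_unitsBox_pow_le_mul_rpow K (Nat.succ_ne_zero (finrank ℚ K)) (half_pos hε)
  obtain ⟨C₂, hC₂, hdiv⟩ := exists_ncard_dvd_span_natAbs_le_mul_rpow K (half_pos hε)
  refine ⟨max 1 (C₁ * C₂), by positivity, fun P hP u => ?_⟩
  have hP1 : 1 ≤ P := by linarith
  change ((normFiber K u P).ncard : ℝ) ≤ _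
  rcases eq_or_ne u 0 with rfl | hu
  · have hle : (normFiber K 0 P).ncard ≤ 1 :=
      (Set.ncard_le_ncard (normFiber_zero_subset K P)).trans_eq (Set.ncard_singleton 0)
    exact (Nat.cast_le_one.mpr hle).trans
      (one_le_mul_of_one_le_of_one_le (le_max_left _ _) (Real.one_le_rpow hP1 hε.le))
  rcases (normFiber K u P).eq_empty_or_nonempty with hempty | hne
  · rw [hempty, Set.ncard_empty, Nat.cast_zero]; positivity
  calc ((normFiber K u P).ncard : ℝ)
      ≤ (unitsBox K (P ^ (finrank ℚ K + 1))).ncard *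
          {I : Ideal (𝓞 K) | I ∣ Ideal.span {((u.natAbs : ℕ) : 𝓞 K)}}.ncard := by
        exact_mod_cast ncard_normFiber_le hu hP1
    _ ≤ C₁ * P ^ (ε / 2) * (C₂ * P ^ (ε / 2)) := by
        gcongr
        exacts [hunits P hP1, hdiv P hP1 u hu hne]
    _ = C₁ * C₂ * P ^ ε := by rw [mul_mul_mul_comm, ← Real.rpow_add (by linarith), add_halves]
    _ ≤ max 1 (C₁ * C₂) * P ^ ε := by gcongr; exact le_max_right _ _
end

section
/- Let F be a field and let L₁,…,L_{2r} be nonzero linear (affine-linear) polynomials in r variables t = (t₁,…,t_r) over F such that, with L_{2r+1} = 1, the set {L₁,…,L_{2r}, 1} satisfies Condition I. Then the F-vector space Λ = {λ = (λ₁,…,λ_{2r+1}) ∈ F^{2r+1} : Σ_{i=1}^{2r+1} λ_i L_i(t) = 0 identically in t} has dimension r, and for any basis λ^{(1)},…,λ^{(r)} of Λ and any nonzero scalars ρ₁,…,ρ_{2r+1} ∈ F*, the (r × (2r+1))-matrix A = (a_ij) with a_ij = λ_j^{(i)}·ρ_j satisfies Condition II. -/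
/-!
Λ is the kernel of `λ ↦ ∑ λᵢ Lᵢ`, whose image lies in the affine-linear polynomials, a space of
dimension `r + 1`, and contains the `r + 1` independent members of a set from Condition I; so the
image has dimension `r + 1` and `Λ` dimension `r`.

For Condition II, remove column `j₀` and take the sets `𝓐, 𝓑` of Condition I for `L_{j₀}`. As
`|𝓐| + |𝓑| = 2r + 2` and `𝓐 ∩ 𝓑 = {j₀}`, the columns `𝓐 \ {j₀}` and `𝓑 \ {j₀}` partition the rest.
If the block on the columns `𝓐 \ {j₀}` were singular, a nonzero relation `λ ∈ Λ` would vanish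
there, hence be supported on `𝓑`, contradicting the independence of the `L` indexed by `𝓑`.
-/

/-- Condition II for an `(r × (2r+1))`-matrix: removing any one column, the remaining `2r`
columns can be partitioned into two `(r × r)`-matrices of full rank. -/
def CondII {F : Type*} [Field F] {r : ℕ} (A : Matrix (Fin r) (Fin (2 * r + 1)) F) : Prop :=
  ∀ j₀ : Fin (2 * r + 1), ∃ σ τ : Fin r → Fin (2 * r + 1),
    Function.Injective σ ∧ Function.Injective τ ∧
    (∀ i, σ i ≠ j₀) ∧ (∀ i, τ i ≠ j₀) ∧ (∀ i i', σ i ≠ τ i') ∧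
    (Matrix.of fun i k : Fin r => A i (σ k)).det ≠ 0 ∧
    (Matrix.of fun i k : Fin r => A i (τ k)).det ≠ 0

/-- Condition I for the family `𝓛 = {L₀, …, L_{2r}}` (with one of them the constant `1`):
for each member `L_{i₀}` there are subsets `𝓐, 𝓑 ⊆ 𝓛` of linearly independent functions with
`|𝓐| = |𝓑| = r+1` and `𝓐 ∩ 𝓑 = {L_{i₀}}`. -/
def CondI {F : Type*} [Field F] {r : ℕ} (L : Fin (2 * r + 1) → MvPolynomial (Fin r) F) : Prop :=
  ∀ i₀ : Fin (2 * r + 1), ∃ A B : Finset (Fin (2 * r + 1)),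
    i₀ ∈ A ∧ i₀ ∈ B ∧ A.card = r + 1 ∧ B.card = r + 1 ∧
    (∀ j ∈ A, ∀ k ∈ B, L j = L k → j = i₀ ∧ k = i₀) ∧
    LinearIndependent F (fun j : A => L j.1) ∧
    LinearIndependent F (fun k : B => L k.1)

open Module Submodule

namespace MvPolynomial

theorem restrictTotalDegree_one_le_span {σ R : Type*} [CommSemiring R] :
    restrictTotalDegree σ R 1 ≤ span R (Set.range fun o : Option σ => o.elim 1 X) := by
  intro p hp
  rw [mem_restrictTotalDegree] at hp
  rw [p.as_sum]
  refine sum_mem fun m hm => ?_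
  rcases Nat.le_one_iff_eq_zero_or_eq_one.mp ((le_totalDegree hm).trans hp) with h | h
  · obtain rfl : m = 0 := (Finsupp.degree_eq_zero_iff m).mp h
    rw [monomial_zero', C_eq_smul_one]
    exact smul_mem _ _ (subset_span ⟨none, rfl⟩)
  · obtain ⟨i, rfl⟩ := (Finsupp.sum_eq_one_iff m).mp h
    rw [← C_mul_X_eq_monomial, ← smul_eq_C_mul]
    exact smul_mem _ _ (subset_span ⟨some i, rfl⟩)

theorem finrank_restrictTotalDegree_one_le {σ K : Type*} [Fintype σ] [Field K] :
    finrank K (restrictTotalDegree σ K 1) ≤ Fintype.card σ + 1 := by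
  set v : Option σ → MvPolynomial σ K := fun o => o.elim 1 X
  have := FiniteDimensional.span_of_finite K (Set.finite_range v)
  calc finrank K (restrictTotalDegree σ K 1)
      _ ≤ finrank K (span K (Set.range v)) := finrank_mono restrictTotalDegree_one_le_span
      _ ≤ Fintype.card σ + 1 := by simpa [Set.finrank] using finrank_range_le_card (R := K) v

end MvPolynomial

section Relations

variable {F ι M : Type*} [Field F] [Fintype ι] [AddCommGroup M] [Module F M]

theorem finrank_ker_linearCombination_add_finrank_span (v : ι → M) :
    finrank F (LinearMap.ker (Fintype.linearCombination F v)) + finrank F (span F (Set.range v)) =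
      Fintype.card ι := by
  rw [← Fintype.range_linearCombination, add_comm, LinearMap.finrank_range_add_finrank_ker,
    finrank_fintype_fun_eq_card]

theorem eq_zero_of_mem_ker_linearCombination {v : ι → M} {T : Finset ι}
    (hT : LinearIndependent F fun k : T => v k) {c : ι → F}
    (hc : c ∈ LinearMap.ker (Fintype.linearCombination F v)) (hcT : ∀ j ∉ T, c j = 0) :
    c = 0 := by
  rw [LinearMap.mem_ker, Fintype.linearCombination_apply,
    ← Finset.sum_subset T.subset_univ fun j _ hj => by rw [hcT j hj, zero_smul],
    ← Finset.sum_attach] at hc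
  funext j
  by_cases hj : j ∈ T
  · exact Fintype.linearIndependent_iff.mp hT (fun k => c k) hc ⟨j, hj⟩
  · exact hcT j hj

theorem det_basis_relations_ne_zero {v : ι → M} {κ : Type*} [Fintype κ] [DecidableEq κ]
    (b : Basis κ F (LinearMap.ker (Fintype.linearCombination F v))) {ρ : ι → F}
    (hρ : ∀ j, ρ j ≠ 0) {T : Finset ι} (hT : LinearIndependent F fun k : T => v k)
    {σ : κ → ι} (hσ : ∀ j ∉ T, j ∈ Set.range σ) :
    (Matrix.of fun i k => (b i : ι → F) (σ k) * ρ (σ k)).det ≠ 0 := by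
  have hscale : (Matrix.of fun i k => (b i : ι → F) (σ k) * ρ (σ k)).det =
      (∏ k, ρ (σ k)) * (Matrix.of fun i k => (b i : ι → F) (σ k)).det := by
    rw [← Matrix.det_mul_row]
    congr 1
    ext i k
    exact mul_comm _ _
  rw [hscale, mul_ne_zero_iff]
  refine ⟨Finset.prod_ne_zero_iff.mpr fun k _ => hρ (σ k), fun hdet => ?_⟩
  obtain ⟨w, hw, hwM⟩ := Matrix.exists_vecMul_eq_zero_iff.mpr hdet
  set c : ι → F := (b.equivFun.symm w : ι → F)
  have hcσ : ∀ k, c (σ k) = 0 := fun k => by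
    simpa [c, Matrix.vecMul, dotProduct, Finset.sum_apply] using congrFun hwM k
  have hc : c = 0 := eq_zero_of_mem_ker_linearCombination hT (b.equivFun.symm w).2 fun j hj => by
    obtain ⟨k, rfl⟩ := hσ j hj
    exact hcσ k
  exact hw (b.equivFun.symm.injective (by rw [map_zero]; exact Subtype.ext hc))

end Relations

theorem Finset.compl_subset_erase_of_inter_subset {α : Type*} [Fintype α] [DecidableEq α]
    {A B : Finset α} {a : α} (ha : a ∈ B) (hAB : A ∩ B ⊆ {a})
    (hcard : Fintype.card α + 1 ≤ A.card + B.card) : Bᶜ ⊆ A.erase a := by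
  intro j hj
  rw [mem_compl] at hj
  refine mem_erase.mpr ⟨ne_of_mem_of_not_mem ha hj |>.symm, ?_⟩
  by_contra hjA
  have hsub : A ∪ B ⊆ univ.erase j := fun x hx => mem_erase.mpr
    ⟨by rintro rfl; exact (mem_union.mp hx).elim hjA hj, mem_univ x⟩
  have hunion := card_le_card hsub
  have hinter := card_le_card hAB
  have := card_union_add_card_inter A B
  rw [card_erase_of_mem (mem_univ j), card_univ] at hunion
  rw [card_singleton] at hinter
  have := Fintype.card_pos_iff.mpr ⟨a⟩
  omega

theorem finrank_span_of_totalDegree_le_one {F : Type*} [Field F] {r n : ℕ}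
    {L : Fin n → MvPolynomial (Fin r) F} (hdeg : ∀ i, (L i).totalDegree ≤ 1)
    {A : Finset (Fin n)} (hcA : A.card = r + 1) (hA : LinearIndependent F fun j : A => L j) :
    finrank F (span F (Set.range L)) = r + 1 := by
  have := FiniteDimensional.span_of_finite F (Set.finite_range L)
  refine le_antisymm ?_ ?_
  · calc finrank F (span F (Set.range L))
        _ ≤ finrank F (MvPolynomial.restrictTotalDegree (Fin r) F 1) :=
          finrank_mono <| span_le.mpr <| Set.range_subset_iff.mpr fun i =>
            (MvPolynomial.mem_restrictTotalDegree _ _ _).mpr (hdeg i)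
        _ ≤ r + 1 := by simpa using MvPolynomial.finrank_restrictTotalDegree_one_le (σ := Fin r)
  · calc r + 1
        _ = finrank F (span F (Set.range fun j : A => L j)) := by
          rw [finrank_span_eq_card hA, Fintype.card_coe, hcA]
        _ ≤ finrank F (span F (Set.range L)) :=
          finrank_mono (span_mono (Set.range_comp_subset_range _ L))

theorem condII_of_condI {F : Type*} [Field F] {r : ℕ}
    {L : Fin (2 * r + 1) → MvPolynomial (Fin r) F} (hI : CondI L)
    (b : Basis (Fin r) F (LinearMap.ker (Fintype.linearCombination F L)))
    {ρ : Fin (2 * r + 1) → F} (hρ : ∀ j, ρ j ≠ 0) :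
    CondII (Matrix.of fun i j => (b i : Fin (2 * r + 1) → F) j * ρ j) := by
  intro j₀
  obtain ⟨A, B, hA, hB, hcA, hcB, hAB, hliA, hliB⟩ := hI j₀
  have hinter : A ∩ B ⊆ {j₀} := fun j hj => by
    rw [Finset.mem_inter] at hj
    exact Finset.mem_singleton.mpr (hAB j hj.1 j hj.2 rfl).1
  have hcard : Fintype.card (Fin (2 * r + 1)) + 1 ≤ A.card + B.card := by
    rw [Fintype.card_fin, hcA, hcB]; omega
  have hinter' : B ∩ A ⊆ {j₀} := Finset.inter_comm A B ▸ hinter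
  set σ := (A.erase j₀).orderEmbOfFin (by rw [Finset.card_erase_of_mem hA, hcA])
  set τ := (B.erase j₀).orderEmbOfFin (by rw [Finset.card_erase_of_mem hB, hcB])
  have hσ (i : Fin r) : σ i ∈ A.erase j₀ := Finset.orderEmbOfFin_mem _ _ i
  have hτ (i : Fin r) : τ i ∈ B.erase j₀ := Finset.orderEmbOfFin_mem _ _ i
  refine ⟨σ, τ, σ.injective, τ.injective, fun i => Finset.ne_of_mem_erase (hσ i),
    fun i => Finset.ne_of_mem_erase (hτ i), fun i i' h => Finset.ne_of_mem_erase (hσ i) ?_,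
    det_basis_relations_ne_zero b hρ hliB fun j hj => ?_,
    det_basis_relations_ne_zero b hρ hliA fun j hj => ?_⟩
  · exact Finset.mem_singleton.mp <| hinter <| Finset.mem_inter.mpr
      ⟨Finset.mem_of_mem_erase (hσ i), h ▸ Finset.mem_of_mem_erase (hτ i')⟩
  · rw [Finset.range_orderEmbOfFin]
    exact Finset.compl_subset_erase_of_inter_subset hB hinter hcard (Finset.mem_compl.mpr hj)
  · rw [Finset.range_orderEmbOfFin]
    exact Finset.compl_subset_erase_of_inter_subset hA hinter' (by omega)
      (Finset.mem_compl.mpr hj)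

theorem relation_space_of_condI {F : Type*} [Field F] (r : ℕ)
    (L : Fin (2 * r + 1) → MvPolynomial (Fin r) F)
    (hdeg : ∀ i, (L i).totalDegree ≤ 1)
    (hI : CondI L) :
    Module.finrank F (LinearMap.ker (Fintype.linearCombination F L)) = r ∧
    ∀ (bΛ : Module.Basis (Fin r) F (LinearMap.ker (Fintype.linearCombination F L)))
      (ρ : Fin (2 * r + 1) → F), (∀ j, ρ j ≠ 0) →
      CondII (Matrix.of fun i j => ((bΛ i : Fin (2 * r + 1) → F) j) * ρ j) := by
  refine ⟨?_, fun bΛ ρ hρ => condII_of_condI hI bΛ hρ⟩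
  obtain ⟨A, -, -, -, hcA, -, -, hliA, -⟩ := hI 0
  have hsum := finrank_ker_linearCombination_add_finrank_span (F := F) L
  rw [finrank_span_of_totalDegree_le_one hdeg hcA hliA, Fintype.card_fin] at hsum
  omega
end
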